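/- Let (E,P) be a random locally convex module, x ∈ E, and G ⊆ E a nonempty T_c-closed subset having the countable concatenation property such that 1_A·{x} ∩ 1_A·G = ∅ for all A ∈ F with P(A) > 0. Then d*(x,G) > 0 a.s. on Ω, i.e., min(d*(x,G),1) ∈ L⁰₊₊. -/

import Mathlib

open MeasureTheory

section Preamble

variable {Ω : Type*} [MeasurableSpace Ω] {μ : Measure Ω}

/-- `L⁰(F,𝕜)` is a commutative ring under the pointwise operations. -/
noncomputable instance L0.instCommRing {𝕜 : Type*} [RCLike 𝕜] : CommRing (Ω →ₘ[μ] 𝕜) :=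
  { (inferInstance : AddCommGroup (Ω →ₘ[μ] 𝕜)),
    (inferInstance : CommMonoid (Ω →ₘ[μ] 𝕜)) with
    left_distrib := fun f g h => AEEqFun.toGerm_injective <| by
      simp only [AEEqFun.mul_toGerm, AEEqFun.add_toGerm, mul_add]
    right_distrib := fun f g h => AEEqFun.toGerm_injective <| by
      simp only [AEEqFun.mul_toGerm, AEEqFun.add_toGerm, add_mul]
    zero_mul := fun f => AEEqFun.toGerm_injective <| by
      simp only [AEEqFun.mul_toGerm, AEEqFun.zero_toGerm, zero_mul]
    mul_zero := fun f => AEEqFun.toGerm_injective <| by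
      simp only [AEEqFun.mul_toGerm, AEEqFun.zero_toGerm, mul_zero] }

/-- The indicator function of a measurable set `A`, as an element of `L⁰(F,𝕜)`. -/
noncomputable def L0.ind (μ : Measure Ω) (𝕜 : Type*) [RCLike 𝕜] (A : Set Ω)
    (_hA : MeasurableSet A) : Ω →ₘ[μ] 𝕜 :=
  AEEqFun.mk (A.indicator fun _ => (1 : 𝕜))
    (stronglyMeasurable_const.indicator _hA).aestronglyMeasurable

/-- The pointwise modulus `|ξ|` of an element of `L⁰(F,𝕜)`, as an element of `L⁰(F,ℝ)`. -/
noncomputable def L0.abs {𝕜 : Type*} [RCLike 𝕜] (ξ : Ω →ₘ[μ] 𝕜) : Ω →ₘ[μ] ℝ :=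
  AEEqFun.comp (fun z => ‖z‖) continuous_norm ξ

/-- An element of `L⁰(F,ℝ)` is strictly positive on `Ω`, i.e. lies in `L⁰₊₊`. -/
def L0.StrPos (ξ : Ω →ₘ[μ] ℝ) : Prop := ∀ᵐ ω ∂μ, 0 < ξ ω

/-- A countable measurable partition of `Ω`. -/
structure IsMeasPartition {Ω : Type*} [MeasurableSpace Ω] (A : ℕ → Set Ω) : Prop where
  meas : ∀ n, MeasurableSet (A n)
  disj : Pairwise (Function.onFun Disjoint A)
  cover : (⋃ n, A n) = Set.univ

variable {𝕜 : Type*} [RCLike 𝕜] {E : Type*} [AddCommGroup E] [Module (Ω →ₘ[μ] 𝕜) E]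
  {ι : Type*}

/-- `(E, ν)` is a random locally convex module over `𝕜` with base `(Ω,F,P)`: `ν` is a
separating family of `L⁰`-seminorms on the `L⁰(F,𝕜)`-module `E`. -/
structure IsRLCModule (𝕜 : Type*) [RCLike 𝕜] {Ω : Type*} [MeasurableSpace Ω] {μ : Measure Ω}
    {E : Type*} [AddCommGroup E] [Module (Ω →ₘ[μ] 𝕜) E] {ι : Type*} (ν : ι → E → Ω →ₘ[μ] ℝ) : Prop where
  nonneg : ∀ i x, 0 ≤ ν i x
  smul : ∀ i (ξ : Ω →ₘ[μ] 𝕜) x, ν i (ξ • x) = L0.abs ξ * ν i x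
  add_le : ∀ i x y, ν i (x + y) ≤ ν i x + ν i y
  separating : ∀ x, (∀ i, ν i x = 0) → x = 0

/-- `(E, n)` is a random normed module over `𝕜` with base `(Ω,F,P)`. -/
structure IsRNModule (𝕜 : Type*) [RCLike 𝕜] {Ω : Type*} [MeasurableSpace Ω] {μ : Measure Ω}
    {E : Type*} [AddCommGroup E] [Module (Ω →ₘ[μ] 𝕜) E] (n : E → Ω →ₘ[μ] ℝ) : Prop where
  nonneg : ∀ x, 0 ≤ n x
  smul : ∀ (ξ : Ω →ₘ[μ] 𝕜) x, n (ξ • x) = L0.abs ξ * n x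
  add_le : ∀ x y, n (x + y) ≤ n x + n y
  definite : ∀ x, n x = 0 → x = 0

/-- `‖x‖_Q`, the `L⁰`-seminorm associated with a finite nonempty subfamily `Q ⊆ P`. -/
noncomputable def nQ (ν : ι → E → Ω →ₘ[μ] ℝ) (Q : Finset ι) (hQ : Q.Nonempty) (x : E) :
    Ω →ₘ[μ] ℝ :=
  Q.sup' hQ fun i => ν i x

/-- The neighbourhood filter of a point in the locally `L⁰`-convex topology `T_c`,
generated by the balls `x + B_Q(ε)` with `Q` finite and `ε ∈ L⁰₊₊`. -/
noncomputable def tcNhd (ν : ι → E → Ω →ₘ[μ] ℝ) (x : E) : Filter E :=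
  ⨅ (Q : {Q : Finset ι // Q.Nonempty}) (ε : {ε : Ω →ₘ[μ] ℝ // L0.StrPos ε}),
    Filter.principal {y | nQ ν Q.1 Q.2 (y - x) ≤ ε.1}

/-- The locally `L⁰`-convex topology `T_c` on `E` induced by the family `ν`. -/
noncomputable def tcTop (ν : ι → E → Ω →ₘ[μ] ℝ) : TopologicalSpace E :=
  .mkOfNhds (tcNhd ν)

/-- The neighbourhood filter of a point in the `(ε,λ)`-topology, generated by the
neighbourhoods `x + N(Q,ε,λ)`. -/
noncomputable def elNhd (ν : ι → E → Ω →ₘ[μ] ℝ) (x : E) : Filter E :=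
  ⨅ (Q : {Q : Finset ι // Q.Nonempty}) (e : {e : ℝ // 0 < e}) (l : {l : ℝ // 0 < l ∧ l < 1}),
    Filter.principal {y | (μ {ω | nQ ν Q.1 Q.2 (y - x) ω < e.1}).toReal > 1 - l.1}

/-- The `(ε,λ)`-topology on `E` induced by the family `ν`. -/
noncomputable def elTop (ν : ι → E → Ω →ₘ[μ] ℝ) : TopologicalSpace E :=
  .mkOfNhds (elNhd ν)

/-- A net (indexed by a directed preordered type) is Cauchy in the `(ε,λ)`-topology. -/
def ElCauchy (ν : ι → E → Ω →ₘ[μ] ℝ) {J : Type*} [Preorder J] (u : J → E) : Prop :=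
  ∀ (Q : Finset ι) (hQ : Q.Nonempty) (e l : ℝ), 0 < e → 0 < l → l < 1 →
    ∃ j₀, ∀ j k, j₀ ≤ j → j₀ ≤ k →
      (μ {ω | nQ ν Q hQ (u j - u k) ω < e}).toReal > 1 - l

/-- A net converges to `x` in the `(ε,λ)`-topology. -/
def ElLim (ν : ι → E → Ω →ₘ[μ] ℝ) {J : Type*} [Preorder J] (u : J → E) (x : E) : Prop :=
  ∀ (Q : Finset ι) (hQ : Q.Nonempty) (e l : ℝ), 0 < e → 0 < l → l < 1 →
    ∃ j₀, ∀ j, j₀ ≤ j → (μ {ω | nQ ν Q hQ (u j - x) ω < e}).toReal > 1 - l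

/-- `E` is complete in the `(ε,λ)`-topology: every Cauchy net converges. -/
def ElComplete (ν : ι → E → Ω →ₘ[μ] ℝ) : Prop :=
  ∀ (J : Type*) (_ : Preorder J) (_ : IsDirected J (· ≤ ·)) (_ : Nonempty J) (u : J → E),
    ElCauchy ν u → ∃ x, ElLim ν u x

/-- A net is Cauchy in the locally `L⁰`-convex topology `T_c`. -/
def TcCauchy (ν : ι → E → Ω →ₘ[μ] ℝ) {J : Type*} [Preorder J] (u : J → E) : Prop :=
  ∀ (Q : Finset ι) (hQ : Q.Nonempty) (ε : Ω →ₘ[μ] ℝ), L0.StrPos ε →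
    ∃ j₀, ∀ j k, j₀ ≤ j → j₀ ≤ k → nQ ν Q hQ (u j - u k) ≤ ε

/-- A net converges to `x` in the locally `L⁰`-convex topology `T_c`. -/
def TcLim (ν : ι → E → Ω →ₘ[μ] ℝ) {J : Type*} [Preorder J] (u : J → E) (x : E) : Prop :=
  ∀ (Q : Finset ι) (hQ : Q.Nonempty) (ε : Ω →ₘ[μ] ℝ), L0.StrPos ε →
    ∃ j₀, ∀ j, j₀ ≤ j → nQ ν Q hQ (u j - x) ≤ ε

/-- `E` is complete in the locally `L⁰`-convex topology: every Cauchy net converges. -/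
def TcComplete (ν : ι → E → Ω →ₘ[μ] ℝ) : Prop :=
  ∀ (J : Type*) (_ : Preorder J) (_ : IsDirected J (· ≤ ·)) (_ : Nonempty J) (u : J → E),
    TcCauchy ν u → ∃ x, TcLim ν u x

/-- A subset `G` of the `L⁰(F,𝕜)`-module `E` has the countable concatenation property:
every countable concatenation of elements of `G` is well defined and lies in `G`. -/
def HasCCP (μ : Measure Ω) (𝕜 : Type*) [RCLike 𝕜] {E : Type*} [AddCommGroup E]
    [Module (Ω →ₘ[μ] 𝕜) E] (G : Set E) : Prop :=
  ∀ (A : ℕ → Set Ω) (hA : IsMeasPartition A) (x : ℕ → E), (∀ n, x n ∈ G) →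
    ∃ x₀ ∈ G, ∀ n, L0.ind μ 𝕜 (A n) (hA.meas n) • x₀ = L0.ind μ 𝕜 (A n) (hA.meas n) • x n

end Preamble

/-!
For each finite `Q`, the countable concatenation property makes `{‖x - y‖_Q : y ∈ G}` downward
directed, so its infimum `d_Q` exists in `L⁰` and is the pointwise infimum of a sequence
`‖x - yₙ‖_Q`; the `d_Q ⊓ 1` are upward directed and have a supremum `m`. Every `d_Q` vanishes on
`A = {m ≤ 0}`. Concatenating some `y₀ ∈ G` on `Aᶜ` with each `yₙ` on the part of `A` where
`‖x - yₙ‖_Q ≤ ε` gives a point of `G` in the `T_c`-ball `B_Q(ε)` around `z = 1_A x + 1_{Aᶜ} y₀`,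
so `z ∈ G` by closedness. As `1_A z = 1_A x`, the hypothesis on `x` forces `P(A) = 0`.
-/

open Filter Set Topology

namespace L0

variable {Ω : Type*} [MeasurableSpace Ω] {μ : Measure Ω}

protected lemma neg_le_neg {f g : Ω →ₘ[μ] ℝ} (h : f ≤ g) : -g ≤ -f := by
  rw [← AEEqFun.coeFn_le]
  filter_upwards [AEEqFun.coeFn_le.2 h, AEEqFun.coeFn_neg f, AEEqFun.coeFn_neg g] with ω h e₁ e₂
  simpa [e₁, e₂] using h

lemma strPos_one : L0.StrPos (1 : Ω →ₘ[μ] ℝ) := by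
  filter_upwards [AEEqFun.coeFn_one (β := ℝ) (μ := μ)] with ω e
  simp [e]

lemma StrPos.inf {ε ε' : Ω →ₘ[μ] ℝ} (h : L0.StrPos ε) (h' : L0.StrPos ε') :
    L0.StrPos (ε ⊓ ε') := by
  filter_upwards [h, h', AEEqFun.coeFn_inf ε ε'] with ω h h' e
  simpa [e] using ⟨h, h'⟩

lemma coeFn_finset_sup' {ι : Type*} (Q : Finset ι) (hQ : Q.Nonempty) (f : ι → Ω →ₘ[μ] ℝ) :
    ⇑(Q.sup' hQ f) =ᵐ[μ] fun ω => Q.sup' hQ fun i => f i ω := by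
  induction hQ using Finset.Nonempty.cons_induction with
  | singleton i => simp
  | cons i Q hiQ hQ ih =>
    filter_upwards [AEEqFun.coeFn_sup (f i) (Q.sup' hQ f), ih] with ω e₁ e₂
    simp [Finset.sup'_cons hQ, e₁, e₂]

lemma mul_finset_sup' {ι : Type*} {a : Ω →ₘ[μ] ℝ} (ha : 0 ≤ a) (Q : Finset ι) (hQ : Q.Nonempty)
    (f : ι → Ω →ₘ[μ] ℝ) : a * Q.sup' hQ f = Q.sup' hQ fun i => a * f i := by
  refine AEEqFun.ext ?_
  have hmul : ∀ᵐ ω ∂μ, ∀ i ∈ (Q : Set ι), (a * f i) ω = a ω * f i ω :=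
    (ae_ball_iff Q.countable_toSet).2 fun i _ => AEEqFun.coeFn_mul a (f i)
  filter_upwards [AEEqFun.coeFn_mul a (Q.sup' hQ f), coeFn_finset_sup' Q hQ f,
    coeFn_finset_sup' Q hQ (fun i => a * f i), hmul, AEEqFun.coeFn_le.2 ha,
    AEEqFun.coeFn_zero (β := ℝ) (μ := μ)] with ω e₁ e₂ e₃ e₄ ha e₀
  rw [e₀] at ha
  rw [e₁, e₃, Pi.mul_apply, e₂,
    Finset.apply_sup'_eq_sup'_comp hQ (a ω * ·) fun r s => mul_max_of_nonneg r s ha]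
  exact Finset.sup'_congr hQ rfl fun i hi => (e₄ i hi).symm

variable {𝕜 : Type*} [RCLike 𝕜]

lemma coeFn_abs (ξ : Ω →ₘ[μ] 𝕜) : ⇑(L0.abs ξ) =ᵐ[μ] fun ω => ‖ξ ω‖ :=
  AEEqFun.coeFn_comp _ _ _

lemma abs_nonneg (ξ : Ω →ₘ[μ] 𝕜) : 0 ≤ L0.abs ξ := by
  rw [← AEEqFun.coeFn_le]
  filter_upwards [coeFn_abs ξ, AEEqFun.coeFn_zero (β := ℝ) (μ := μ)] with ω e₁ e₂
  simp [e₁, e₂]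

lemma abs_zero : L0.abs (0 : Ω →ₘ[μ] 𝕜) = 0 := by
  refine AEEqFun.ext ?_
  filter_upwards [coeFn_abs (0 : Ω →ₘ[μ] 𝕜), AEEqFun.coeFn_zero (β := ℝ) (μ := μ),
    AEEqFun.coeFn_zero (β := 𝕜) (μ := μ)] with ω e₁ e₂ e₃
  simp [e₁, e₂, e₃]

lemma abs_neg_one : L0.abs (-1 : Ω →ₘ[μ] 𝕜) = 1 := by
  refine AEEqFun.ext ?_
  filter_upwards [coeFn_abs (-1 : Ω →ₘ[μ] 𝕜), AEEqFun.coeFn_neg (1 : Ω →ₘ[μ] 𝕜),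
    AEEqFun.coeFn_one (β := 𝕜) (μ := μ), AEEqFun.coeFn_one (β := ℝ) (μ := μ)] with ω e₁ e₂ e₃ e₄
  simp [e₁, e₂, e₃, e₄]

lemma coeFn_ind {A : Set Ω} (hA : MeasurableSet A) :
    ⇑(L0.ind μ 𝕜 A hA) =ᵐ[μ] A.indicator 1 :=
  AEEqFun.coeFn_mk _ _

lemma coeFn_abs_ind {A : Set Ω} (hA : MeasurableSet A) :
    ⇑(L0.abs (L0.ind μ 𝕜 A hA)) =ᵐ[μ] A.indicator 1 := by
  filter_upwards [coeFn_abs (L0.ind μ 𝕜 A hA), coeFn_ind (𝕜 := 𝕜) hA] with ω e₁ e₂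
  by_cases h : ω ∈ A <;> simp [e₁, e₂, h]

lemma ind_mul_self {A : Set Ω} (hA : MeasurableSet A) :
    L0.ind μ 𝕜 A hA * L0.ind μ 𝕜 A hA = L0.ind μ 𝕜 A hA := by
  refine AEEqFun.ext ?_
  filter_upwards [AEEqFun.coeFn_mul (L0.ind μ 𝕜 A hA) (L0.ind μ 𝕜 A hA),
    coeFn_ind (𝕜 := 𝕜) hA] with ω e₁ e₂
  by_cases h : ω ∈ A <;> simp [e₁, e₂, h]

lemma ind_mul_ind_compl {A : Set Ω} (hA : MeasurableSet A) :
    L0.ind μ 𝕜 A hA * L0.ind μ 𝕜 Aᶜ hA.compl = 0 := by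
  refine AEEqFun.ext ?_
  filter_upwards [AEEqFun.coeFn_mul (L0.ind μ 𝕜 A hA) (L0.ind μ 𝕜 Aᶜ hA.compl),
    coeFn_ind (𝕜 := 𝕜) hA, coeFn_ind (𝕜 := 𝕜) hA.compl,
    AEEqFun.coeFn_zero (β := 𝕜) (μ := μ)] with ω e₁ e₂ e₃ e₄
  by_cases h : ω ∈ A <;> simp [e₁, e₂, e₃, e₄, h]

variable {E : Type*} [AddCommGroup E] [Module (Ω →ₘ[μ] 𝕜) E]

lemma exists_smul_ind_eq_and_smul_ind_compl_eq {A : Set Ω} (hA : MeasurableSet A) (x y : E) :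
    ∃ z : E, L0.ind μ 𝕜 A hA • z = L0.ind μ 𝕜 A hA • x ∧
      L0.ind μ 𝕜 Aᶜ hA.compl • z = L0.ind μ 𝕜 Aᶜ hA.compl • y := by
  refine ⟨L0.ind μ 𝕜 A hA • x + L0.ind μ 𝕜 Aᶜ hA.compl • y, ?_, ?_⟩
  · rw [smul_add, smul_smul, smul_smul, ind_mul_self, ind_mul_ind_compl, zero_smul, add_zero]
  · rw [smul_add, smul_smul, smul_smul, ind_mul_self, mul_comm, ind_mul_ind_compl, zero_smul,
      zero_add]

end L0

lemma nQ_mono {Ω : Type*} [MeasurableSpace Ω] {μ : Measure Ω} {E : Type*} {ι : Type*}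
    {ν : ι → E → Ω →ₘ[μ] ℝ} {Q Q' : Finset ι} (hQ : Q.Nonempty) (hQQ' : Q ⊆ Q') (w : E) :
    nQ ν Q hQ w ≤ nQ ν Q' (hQ.mono hQQ') w :=
  Finset.sup'_le hQ _ fun _ hi => Finset.le_sup' (fun j => ν j w) (hQQ' hi)

section Seminorms

variable {Ω : Type*} [MeasurableSpace Ω] {μ : Measure Ω} {𝕜 : Type*} [RCLike 𝕜]
  {E : Type*} [AddCommGroup E] [Module (Ω →ₘ[μ] 𝕜) E] {ι : Type*} {ν : ι → E → Ω →ₘ[μ] ℝ}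
  {Q : Finset ι}

lemma nQ_nonneg (hν : IsRLCModule 𝕜 ν) (hQ : Q.Nonempty) (w : E) : 0 ≤ nQ ν Q hQ w :=
  let ⟨i, hi⟩ := hQ
  (hν.nonneg i w).trans (Finset.le_sup' (fun j => ν j w) hi)

lemma nQ_smul (hν : IsRLCModule 𝕜 ν) (hQ : Q.Nonempty) (ξ : Ω →ₘ[μ] 𝕜) (w : E) :
    nQ ν Q hQ (ξ • w) = L0.abs ξ * nQ ν Q hQ w := by
  rw [nQ, nQ, L0.mul_finset_sup' (L0.abs_nonneg ξ)]
  exact Finset.sup'_congr hQ rfl fun i _ => hν.smul i ξ w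

lemma nQ_zero (hν : IsRLCModule 𝕜 ν) (hQ : Q.Nonempty) : nQ ν Q hQ (0 : E) = 0 := by
  simpa [L0.abs_zero] using nQ_smul hν hQ 0 (0 : E)

lemma nQ_sub_comm (hν : IsRLCModule 𝕜 ν) (hQ : Q.Nonempty) (v w : E) :
    nQ ν Q hQ (v - w) = nQ ν Q hQ (w - v) := by
  rw [← neg_sub, ← neg_one_smul (Ω →ₘ[μ] 𝕜) (w - v), nQ_smul hν, L0.abs_neg_one, one_mul]

lemma nQ_eqOn_of_smul_ind_eq (hν : IsRLCModule 𝕜 ν) (hQ : Q.Nonempty) {A : Set Ω}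
    (hA : MeasurableSet A) {v w : E} (h : L0.ind μ 𝕜 A hA • v = L0.ind μ 𝕜 A hA • w) :
    ∀ᵐ ω ∂μ, ω ∈ A → nQ ν Q hQ v ω = nQ ν Q hQ w ω := by
  have h' := congrArg (nQ ν Q hQ) h
  rw [nQ_smul hν, nQ_smul hν] at h'
  filter_upwards [AEEqFun.coeFn_mul (L0.abs (L0.ind μ 𝕜 A hA)) (nQ ν Q hQ v),
    AEEqFun.coeFn_mul (L0.abs (L0.ind μ 𝕜 A hA)) (nQ ν Q hQ w),
    L0.coeFn_abs_ind (𝕜 := 𝕜) hA] with ω e₁ e₂ e₃ hω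
  rw [h'] at e₁
  simpa [e₃, hω] using e₁.symm.trans e₂

end Seminorms

section TcTopology

variable {Ω : Type*} [MeasurableSpace Ω] {μ : Measure Ω} {𝕜 : Type*} [RCLike 𝕜]
  {E : Type*} [AddCommGroup E] [Module (Ω →ₘ[μ] 𝕜) E] {ι : Type*} {ν : ι → E → Ω →ₘ[μ] ℝ}

lemma mem_tcNhd_iff [Nonempty ι] {s : Set E} {x : E} :
    s ∈ tcNhd ν x ↔ ∃ (Q : Finset ι) (hQ : Q.Nonempty) (ε : Ω →ₘ[μ] ℝ),
      L0.StrPos ε ∧ {y | nQ ν Q hQ (y - x) ≤ ε} ⊆ s := by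
  classical
  let ball (p : {Q : Finset ι // Q.Nonempty} × {ε : Ω →ₘ[μ] ℝ // L0.StrPos ε}) : Set E :=
    {y | nQ ν p.1.1 p.1.2 (y - x) ≤ p.2.1}
  have hdir : Directed (· ⊇ ·) ball := by
    rintro ⟨⟨Q₁, hQ₁⟩, ⟨ε₁, hε₁⟩⟩ ⟨⟨Q₂, hQ₂⟩, ⟨ε₂, hε₂⟩⟩
    refine ⟨⟨⟨Q₁ ∪ Q₂, hQ₁.mono Finset.subset_union_left⟩, ⟨ε₁ ⊓ ε₂, hε₁.inf hε₂⟩⟩,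
      fun y hy => ?_, fun y hy => ?_⟩
    · exact (nQ_mono hQ₁ Finset.subset_union_left _).trans (hy.trans inf_le_left)
    · exact (nQ_mono hQ₂ Finset.subset_union_right _).trans (hy.trans inf_le_right)
  have : Nonempty {ε : Ω →ₘ[μ] ℝ // L0.StrPos ε} := ⟨⟨1, L0.strPos_one⟩⟩
  have : Nonempty {Q : Finset ι // Q.Nonempty} :=
    let ⟨i⟩ := ‹Nonempty ι›; ⟨⟨{i}, Finset.singleton_nonempty i⟩⟩
  rw [tcNhd, ← iInf_prod (f := fun p => 𝓟 (ball p)), (hasBasis_iInf_principal hdir).mem_iff]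
  simp only [Prod.exists, Subtype.exists, true_and, ball]
  exact ⟨fun ⟨Q, hQ, ε, hε, h⟩ => ⟨Q, hQ, ε, hε, h⟩, fun ⟨Q, hQ, ε, hε, h⟩ => ⟨Q, hQ, ε, hε, h⟩⟩

lemma mem_of_isClosed_tcTop [Nonempty ι] {G : Set E} (hG : IsClosed[tcTop ν] G) {z : E}
    (h : ∀ (Q : Finset ι) (hQ : Q.Nonempty) (ε : Ω →ₘ[μ] ℝ), L0.StrPos ε →
      ∃ y ∈ G, nQ ν Q hQ (y - z) ≤ ε) : z ∈ G := by
  by_contra hz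
  obtain ⟨Q, hQ, ε, hε, hball⟩ := mem_tcNhd_iff.1 (hG.isOpen_compl z hz)
  obtain ⟨y, hyG, hy⟩ := h Q hQ ε hε
  exact hball hy hyG

end TcTopology

lemma isMeasPartition_disjointed {Ω : Type*} [MeasurableSpace Ω] {B : ℕ → Set Ω}
    (hB : ∀ n, MeasurableSet (B n)) (hU : ⋃ n, B n = univ) : IsMeasPartition (disjointed B) :=
  ⟨MeasurableSet.disjointed hB, disjoint_disjointed B, iUnion_disjointed.trans hU⟩

namespace HasCCP

variable {Ω : Type*} [MeasurableSpace Ω] {μ : Measure Ω} {𝕜 : Type*} [RCLike 𝕜]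
  {E : Type*} [AddCommGroup E] [Module (Ω →ₘ[μ] 𝕜) E] {ι : Type*} {ν : ι → E → Ω →ₘ[μ] ℝ}
  {G : Set E}

lemma exists_mem_nQ_sub_eq (hν : IsRLCModule 𝕜 ν) (hccp : HasCCP μ 𝕜 G) {B : ℕ → Set Ω}
    (hB : ∀ n, MeasurableSet (B n)) (hcover : ∀ᵐ ω ∂μ, ∃ n, ω ∈ B n) {y : ℕ → E}
    (hy : ∀ n, y n ∈ G) (w : E) :
    ∃ y' ∈ G, ∀ (Q : Finset ι) (hQ : Q.Nonempty),
      ∀ᵐ ω ∂μ, ∃ n, ω ∈ B n ∧ nQ ν Q hQ (w - y') ω = nQ ν Q hQ (w - y n) ω := by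
  -- the exceptional null set is added to every piece, so that the pieces cover `Ω`
  set B' : ℕ → Set Ω := fun n => B n ∪ (⋃ m, B m)ᶜ
  have hB' : ∀ n, MeasurableSet (B' n) := fun n =>
    (hB n).union (MeasurableSet.iUnion hB).compl
  have hU : ⋃ n, B' n = univ := by
    refine eq_univ_of_forall fun ω => ?_
    by_cases hω : ω ∈ ⋃ m, B m
    · obtain ⟨n, hn⟩ := mem_iUnion.1 hω
      exact mem_iUnion.2 ⟨n, Or.inl hn⟩
    · exact mem_iUnion.2 ⟨0, Or.inr hω⟩
  have hpart := isMeasPartition_disjointed hB' hU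
  obtain ⟨y', hy'G, hy'⟩ := hccp _ hpart y hy
  refine ⟨y', hy'G, fun Q hQ => ?_⟩
  have hloc : ∀ᵐ ω ∂μ, ∀ n, ω ∈ disjointed B' n →
      nQ ν Q hQ (w - y') ω = nQ ν Q hQ (w - y n) ω :=
    ae_all_iff.2 fun n => nQ_eqOn_of_smul_ind_eq hν hQ (hpart.meas n) <| by
      rw [smul_sub, smul_sub, hy' n]
  filter_upwards [hloc, hcover] with ω hloc hω
  obtain ⟨n, hn⟩ := mem_iUnion.1 (hpart.cover ▸ mem_univ ω)
  refine ⟨n, ?_, hloc n hn⟩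
  rcases disjointed_subset B' n hn with h | h
  · exact h
  · exact absurd (mem_iUnion.2 hω) h

lemma exists_mem_nQ_sub_eq_inf (hν : IsRLCModule 𝕜 ν) (hccp : HasCCP μ 𝕜 G) {y z : E}
    (hy : y ∈ G) (hz : z ∈ G) (x : E) (Q : Finset ι) (hQ : Q.Nonempty) :
    ∃ w ∈ G, nQ ν Q hQ (x - w) = nQ ν Q hQ (x - y) ⊓ nQ ν Q hQ (x - z) := by
  set B := {ω | nQ ν Q hQ (x - y) ω ≤ nQ ν Q hQ (x - z) ω}
  have hB : MeasurableSet B :=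
    measurableSet_le (nQ ν Q hQ (x - y)).stronglyMeasurable.measurable
      (nQ ν Q hQ (x - z)).stronglyMeasurable.measurable
  obtain ⟨w, hwG, hw⟩ := hccp.exists_mem_nQ_sub_eq hν (B := fun n => if n = 0 then B else Bᶜ)
    (fun n => by split_ifs <;> simp [hB, hB.compl])
    (Eventually.of_forall fun ω => by by_cases hω : ω ∈ B <;> [exact ⟨0, hω⟩; exact ⟨1, hω⟩])
    (y := fun n => if n = 0 then y else z) (fun n => by split_ifs <;> assumption) x
  refine ⟨w, hwG, AEEqFun.ext ?_⟩
  filter_upwards [hw Q hQ, AEEqFun.coeFn_inf (nQ ν Q hQ (x - y)) (nQ ν Q hQ (x - z))]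
    with ω ⟨n, hn, e⟩ e'
  rw [e, e']
  rcases n with _ | n
  · exact (min_eq_left hn).symm
  · simp only [n.succ_ne_zero, if_false, B, mem_compl_iff, mem_ofPred_eq, not_le] at hn
    exact (min_eq_right hn.le).symm

lemma exists_mem_nQ_sub_le (hν : IsRLCModule 𝕜 ν) (hccp : HasCCP μ 𝕜 G) {y : ℕ → E}
    (hy : ∀ n, y n ∈ G) (w : E) {Q : Finset ι} (hQ : Q.Nonempty) {ε : Ω →ₘ[μ] ℝ}
    (h : ∀ᵐ ω ∂μ, ∃ n, nQ ν Q hQ (w - y n) ω ≤ ε ω) :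
    ∃ y' ∈ G, nQ ν Q hQ (w - y') ≤ ε := by
  obtain ⟨y', hy'G, hy'⟩ := hccp.exists_mem_nQ_sub_eq hν
    (B := fun n => {ω | nQ ν Q hQ (w - y n) ω ≤ ε ω})
    (fun n => measurableSet_le (nQ ν Q hQ (w - y n)).stronglyMeasurable.measurable
      ε.stronglyMeasurable.measurable) h hy w
  refine ⟨y', hy'G, AEEqFun.coeFn_le.1 ?_⟩
  filter_upwards [hy' Q hQ] with ω ⟨n, hn, e⟩
  exact e ▸ hn

end HasCCP

section OrderCompleteness

open Real

lemma norm_arctan_le_pi_div_two (x : ℝ) : ‖arctan x‖ ≤ π / 2 :=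
  abs_le.2 ⟨(neg_pi_div_two_lt_arctan x).le, (arctan_lt_pi_div_two x).le⟩

lemma DirectedOn.exists_antitone_tendsto_sInf_image {α : Type*} [Preorder α] {T : Set α}
    (hdir : DirectedOn (· ≥ ·) T) (hne : T.Nonempty) {I : α → ℝ} (hI : MonotoneOn I T)
    (hbdd : BddBelow (I '' T)) :
    ∃ u : ℕ → α, (∀ n, u n ∈ T) ∧ Antitone u ∧ Tendsto (I ∘ u) atTop (𝓝 (sInf (I '' T))) := by
  obtain ⟨t, -, ht, htT⟩ := exists_seq_tendsto_sInf (hne.image I) hbdd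
  choose s hsT hs using htT
  have hstep (a : T) (n : ℕ) : ∃ b : T, b.1 ≤ a.1 ∧ b.1 ≤ s n :=
    let ⟨b, hbT, hba, hbs⟩ := hdir a.1 a.2 (s n) (hsT n)
    ⟨⟨b, hbT⟩, hba, hbs⟩
  choose next hnext_le hnext_le' using hstep
  let v : ℕ → T := fun n => Nat.rec ⟨s 0, hsT 0⟩ (fun n a => next a (n + 1)) n
  have hvs (n : ℕ) : (v n).1 ≤ s n := by
    cases n with
    | zero => exact le_rfl
    | succ n => exact hnext_le' _ _
  refine ⟨fun n => (v n).1, fun n => (v n).2, antitone_nat_of_succ_le fun n => hnext_le _ _, ?_⟩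
  refine tendsto_of_tendsto_of_tendsto_of_le_of_le tendsto_const_nhds ht
    (fun n => csInf_le hbdd ⟨_, (v n).2, rfl⟩) fun n => ?_
  rw [Function.comp_apply, ← hs n]
  exact hI (v n).2 (hsT n) (hvs n)

variable {Ω : Type*} [MeasurableSpace Ω] {μ : Measure Ω} [IsFiniteMeasure μ]

lemma integrable_arctan_comp {f : Ω → ℝ} (hf : AEStronglyMeasurable f μ) :
    Integrable (fun ω => arctan (f ω)) μ :=
  (integrable_const (π / 2)).mono' (continuous_arctan.comp_aestronglyMeasurable hf)
    (Eventually.of_forall fun _ => norm_arctan_le_pi_div_two _)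

lemma tendsto_integral_arctan_comp {u : ℕ → Ω → ℝ} {g : Ω → ℝ}
    (hu : ∀ n, AEStronglyMeasurable (u n) μ)
    (h : ∀ᵐ ω ∂μ, Tendsto (fun n => u n ω) atTop (𝓝 (g ω))) :
    Tendsto (fun n => ∫ ω, arctan (u n ω) ∂μ) atTop (𝓝 (∫ ω, arctan (g ω) ∂μ)) :=
  tendsto_integral_of_dominated_convergence (fun _ => π / 2)
    (fun n => continuous_arctan.comp_aestronglyMeasurable (hu n)) (integrable_const _)
    (fun _ => Eventually.of_forall fun _ => norm_arctan_le_pi_div_two _)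
    (h.mono fun _ h => (continuous_arctan.tendsto _).comp h)

lemma ae_le_of_integral_arctan_le_min {f g : Ω → ℝ}
    (hf : AEStronglyMeasurable f μ) (hg : AEStronglyMeasurable g μ)
    (h : ∫ ω, arctan (g ω) ∂μ ≤ ∫ ω, arctan (min (f ω) (g ω)) ∂μ) : g ≤ᵐ[μ] f := by
  have hmin := integrable_arctan_comp (hf.inf hg)
  have hle : (fun ω => arctan (min (f ω) (g ω))) ≤ᵐ[μ] fun ω => arctan (g ω) :=
    Eventually.of_forall fun _ => arctan_mono (min_le_right _ _)
  have heq := (integral_eq_iff_of_ae_le hmin (integrable_arctan_comp hg) hle).1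
    (le_antisymm (integral_mono_ae hmin (integrable_arctan_comp hg) hle) h)
  filter_upwards [heq] with ω hω
  exact min_eq_right_iff.1 (arctan_injective hω)

namespace L0

lemma monotone_integral_arctan_comp : Monotone fun c : Ω →ₘ[μ] ℝ => ∫ ω, arctan (c ω) ∂μ :=
  fun c d h => integral_mono_ae (integrable_arctan_comp c.aestronglyMeasurable)
    (integrable_arctan_comp d.aestronglyMeasurable)
    ((AEEqFun.coeFn_le.2 h).mono fun _ h => arctan_mono h)

lemma bddBelow_range_integral_arctan_comp :
    BddBelow (range fun c : Ω →ₘ[μ] ℝ => ∫ ω, arctan (c ω) ∂μ) := by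
  refine ⟨-(π / 2 * μ.real univ), ?_⟩
  rintro _ ⟨c, rfl⟩
  exact neg_le_of_abs_le (norm_integral_le_of_norm_le_const
    (Eventually.of_forall fun _ => norm_arctan_le_pi_div_two _))

lemma exists_isGLB_of_directedOn {T : Set (Ω →ₘ[μ] ℝ)} (hne : T.Nonempty)
    (hdir : DirectedOn (· ≥ ·) T) (hbdd : BddBelow T) :
    ∃ g, IsGLB T g ∧ ∃ u : ℕ → Ω →ₘ[μ] ℝ, (∀ n, u n ∈ T) ∧ ∀ᵐ ω ∂μ, g ω = ⨅ n, u n ω := by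
  -- minimise the bounded, strictly monotone functional `c ↦ ∫ arctan ∘ c` over `T`
  set I : (Ω →ₘ[μ] ℝ) → ℝ := fun c => ∫ ω, arctan (c ω) ∂μ
  have hIbdd : BddBelow (I '' T) :=
    bddBelow_range_integral_arctan_comp.mono (image_subset_range _ _)
  obtain ⟨u, huT, hu_anti, hIu⟩ := hdir.exists_antitone_tendsto_sInf_image hne
    (monotone_integral_arctan_comp.monotoneOn _) hIbdd
  obtain ⟨b, hb⟩ := hbdd
  set g : Ω →ₘ[μ] ℝ := AEEqFun.mk (fun ω => ⨅ n, u n ω)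
    (AEMeasurable.iInf fun n => (u n).aemeasurable).aestronglyMeasurable
  have hg : ⇑g =ᵐ[μ] fun ω => ⨅ n, u n ω := AEEqFun.coeFn_mk _ _
  have hconv : ∀ᵐ ω ∂μ, Tendsto (fun n => u n ω) atTop (𝓝 (g ω)) := by
    filter_upwards [hg, ae_all_iff.2 fun n => AEEqFun.coeFn_le.2 (hu_anti (Nat.le_succ n)),
      ae_all_iff.2 fun n => AEEqFun.coeFn_le.2 (hb (huT n))] with ω hg hanti hb
    rw [hg]
    exact tendsto_atTop_ciInf (antitone_nat_of_succ_le hanti) ⟨b ω, forall_mem_range.2 hb⟩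
  refine ⟨g, ⟨fun c hc => ?_, fun b' hb' => ?_⟩, u, huT, hg⟩
  · have hIg : I g = sInf (I '' T) :=
      tendsto_nhds_unique (tendsto_integral_arctan_comp (fun n => (u n).aestronglyMeasurable)
        hconv) hIu
    have hmin := tendsto_integral_arctan_comp
      (fun n => c.aestronglyMeasurable.inf (u n).aestronglyMeasurable)
      (hconv.mono fun _ h => tendsto_const_nhds.min h)
    have hlow (n : ℕ) : sInf (I '' T) ≤ ∫ ω, arctan (min (c ω) (u n ω)) ∂μ := by
      obtain ⟨w, hwT, hwc, hwu⟩ := hdir c hc (u n) (huT n)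
      refine (csInf_le hIbdd ⟨w, hwT, rfl⟩).trans (integral_mono_ae
        (integrable_arctan_comp w.aestronglyMeasurable)
        (integrable_arctan_comp (c.aestronglyMeasurable.inf (u n).aestronglyMeasurable)) ?_)
      filter_upwards [AEEqFun.coeFn_le.2 hwc, AEEqFun.coeFn_le.2 hwu] with ω hc hu
      exact arctan_mono (le_min hc hu)
    exact AEEqFun.coeFn_le.1 (ae_le_of_integral_arctan_le_min c.aestronglyMeasurable
      g.aestronglyMeasurable ((le_of_eq hIg).trans (ge_of_tendsto' hmin hlow)))
  · rw [← AEEqFun.coeFn_le]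
    filter_upwards [hg, ae_all_iff.2 fun n => AEEqFun.coeFn_le.2 (hb' (huT n))] with ω hg h
    rw [hg]
    exact le_ciInf h

lemma exists_isLUB_of_directedOn {T : Set (Ω →ₘ[μ] ℝ)} (hne : T.Nonempty)
    (hdir : DirectedOn (· ≤ ·) T) (hbdd : BddAbove T) : ∃ m, IsLUB T m := by
  obtain ⟨M, hM⟩ := hbdd
  obtain ⟨g, hg, -⟩ := exists_isGLB_of_directedOn (T := Neg.neg '' T) (hne.image _)
    (by
      rintro _ ⟨a, ha, rfl⟩ _ ⟨b, hb, rfl⟩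
      obtain ⟨c, hc, hac, hbc⟩ := hdir a ha b hb
      exact ⟨-c, mem_image_of_mem _ hc, L0.neg_le_neg hac, L0.neg_le_neg hbc⟩)
    ⟨-M, by rintro _ ⟨c, hc, rfl⟩; exact L0.neg_le_neg (hM hc)⟩
  refine ⟨-g, fun c hc => ?_, fun b hb => ?_⟩
  · simpa using L0.neg_le_neg (hg.1 (mem_image_of_mem Neg.neg hc))
  · have : -b ∈ lowerBounds (Neg.neg '' T) := by
      rintro _ ⟨c, hc, rfl⟩
      exact L0.neg_le_neg (hb hc)
    simpa using L0.neg_le_neg (hg.2 this)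

end L0

end OrderCompleteness

lemma isGLB_nQ_sub_mono {Ω : Type*} [MeasurableSpace Ω] {μ : Measure Ω} {E : Type*}
    [AddCommGroup E] {ι : Type*} {ν : ι → E → Ω →ₘ[μ] ℝ} {G : Set E} {x : E} {Q Q' : Finset ι}
    (hQ : Q.Nonempty) (hQQ' : Q ⊆ Q') {d d' : Ω →ₘ[μ] ℝ}
    (hd : IsGLB {c | ∃ y ∈ G, c = nQ ν Q hQ (x - y)} d)
    (hd' : IsGLB {c | ∃ y ∈ G, c = nQ ν Q' (hQ.mono hQQ') (x - y)} d') : d ≤ d' :=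
  hd'.2 fun _ ⟨y, hy, e⟩ => e ▸ (hd.1 ⟨y, hy, rfl⟩).trans (nQ_mono hQ hQQ' _)

section Distance

variable {Ω : Type*} [MeasurableSpace Ω] {μ : Measure Ω} {𝕜 : Type*} [RCLike 𝕜]
  {E : Type*} [AddCommGroup E] [Module (Ω →ₘ[μ] 𝕜) E] {ι : Type*} {ν : ι → E → Ω →ₘ[μ] ℝ}
  {G : Set E}

lemma exists_isGLB_nQ_sub [IsFiniteMeasure μ] (hν : IsRLCModule 𝕜 ν) (hccp : HasCCP μ 𝕜 G)
    (hG : G.Nonempty) (x : E) (Q : Finset ι) (hQ : Q.Nonempty) :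
    ∃ d, IsGLB {c | ∃ y ∈ G, c = nQ ν Q hQ (x - y)} d ∧
      ∃ y : ℕ → E, (∀ n, y n ∈ G) ∧ ∀ᵐ ω ∂μ, d ω = ⨅ n, nQ ν Q hQ (x - y n) ω := by
  set T := {c | ∃ y ∈ G, c = nQ ν Q hQ (x - y)}
  have hne : T.Nonempty := let ⟨y₀, hy₀⟩ := hG; ⟨_, y₀, hy₀, rfl⟩
  have hdir : DirectedOn (· ≥ ·) T := by
    rintro _ ⟨y, hy, rfl⟩ _ ⟨z, hz, rfl⟩
    obtain ⟨w, hwG, hw⟩ := hccp.exists_mem_nQ_sub_eq_inf hν hy hz x Q hQ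
    exact ⟨_, ⟨w, hwG, rfl⟩, hw ▸ inf_le_left, hw ▸ inf_le_right⟩
  have hbdd : 0 ∈ lowerBounds T := by
    rintro _ ⟨y, -, rfl⟩
    exact nQ_nonneg hν hQ _
  obtain ⟨d, hd, u, huT, hu⟩ := L0.exists_isGLB_of_directedOn hne hdir ⟨0, hbdd⟩
  choose y hyG hy using huT
  exact ⟨d, hd, y, hyG, by simpa only [hy] using hu⟩

lemma exists_isLUB_inf_one_of_forall_isGLB [IsFiniteMeasure μ] [Nonempty ι] {x : E}
    (h : ∀ (Q : Finset ι) (hQ : Q.Nonempty), ∃ d, IsGLB {c | ∃ y ∈ G, c = nQ ν Q hQ (x - y)} d) :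
    ∃ m, IsLUB {c | ∃ (Q : Finset ι) (hQ : Q.Nonempty) (c' : Ω →ₘ[μ] ℝ),
      IsGLB {c'' | ∃ y ∈ G, c'' = nQ ν Q hQ (x - y)} c' ∧ c = c' ⊓ 1} m := by
  classical
  choose d hd using h
  obtain ⟨i⟩ := ‹Nonempty ι›
  refine L0.exists_isLUB_of_directedOn ⟨_, {i}, Finset.singleton_nonempty i, _, hd _ _, rfl⟩
    ?_ ⟨1, by rintro _ ⟨_, _, _, _, rfl⟩; exact inf_le_right⟩
  rintro _ ⟨Q₁, hQ₁, c₁, hc₁, rfl⟩ _ ⟨Q₂, hQ₂, c₂, hc₂, rfl⟩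
  have hQ := hQ₁.mono (Finset.subset_union_left (s₂ := Q₂))
  exact ⟨_, ⟨_, hQ, _, hd _ hQ, rfl⟩,
    inf_le_inf_right 1 (isGLB_nQ_sub_mono hQ₁ Finset.subset_union_left hc₁ (hd _ hQ)),
    inf_le_inf_right 1 (isGLB_nQ_sub_mono hQ₂ Finset.subset_union_right hc₂ (hd _ hQ))⟩

lemma exists_mem_smul_ind_eq_of_iInf_nQ_sub_le_zero [Nonempty ι] (hν : IsRLCModule 𝕜 ν)
    (hccp : HasCCP μ 𝕜 G) (hGc : IsClosed[tcTop ν] G) {y₀ : E} (hy₀ : y₀ ∈ G) (x : E)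
    {A : Set Ω} (hA : MeasurableSet A) {y : ∀ Q : Finset ι, Q.Nonempty → ℕ → E}
    (hy : ∀ Q hQ n, y Q hQ n ∈ G)
    (hxA : ∀ Q hQ, ∀ᵐ ω ∂μ, ω ∈ A → ⨅ n, nQ ν Q hQ (x - y Q hQ n) ω ≤ 0) :
    ∃ z ∈ G, L0.ind μ 𝕜 A hA • z = L0.ind μ 𝕜 A hA • x := by
  obtain ⟨z, hzA, hzAc⟩ := L0.exists_smul_ind_eq_and_smul_ind_compl_eq (μ := μ) (𝕜 := 𝕜) hA x y₀
  refine ⟨z, mem_of_isClosed_tcTop hGc fun Q hQ ε hε => ?_, hzA⟩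
  -- glue `y₀` on `Aᶜ` with approximants of `x` on `A`
  let y' : ℕ → E := fun | 0 => y₀ | n + 1 => y Q hQ n
  have hy' : ∀ n, y' n ∈ G := by rintro (_ | n) <;> simp [y', hy₀, hy]
  have hzy' : ∀ᵐ ω ∂μ, ∀ n, ω ∈ A → nQ ν Q hQ (z - y' n) ω = nQ ν Q hQ (x - y' n) ω :=
    ae_all_iff.2 fun n => nQ_eqOn_of_smul_ind_eq hν hQ hA (by rw [smul_sub, smul_sub, hzA])
  have hzy₀ : ∀ᵐ ω ∂μ, ω ∈ Aᶜ → nQ ν Q hQ (z - y₀) ω = nQ ν Q hQ (y₀ - y₀) ω :=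
    nQ_eqOn_of_smul_ind_eq hν hQ hA.compl (by rw [smul_sub, smul_sub, hzAc])
  obtain ⟨w, hwG, hw⟩ := hccp.exists_mem_nQ_sub_le hν hy' z hQ (ε := ε) <| by
    filter_upwards [hxA Q hQ, hε, hzy', hzy₀, AEEqFun.coeFn_zero (β := ℝ) (μ := μ)]
      with ω hxω hεω hzy' hzy₀ h0
    by_cases hω : ω ∈ A
    · obtain ⟨n, hn⟩ := exists_lt_of_ciInf_lt ((hxω hω).trans_lt hεω)
      exact ⟨n + 1, (hzy' (n + 1) hω).trans_le hn.le⟩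
    · refine ⟨0, ?_⟩
      rw [hzy₀ hω, sub_self, nQ_zero hν hQ, h0]
      exact hεω.le
  exact ⟨w, hwG, nQ_sub_comm hν hQ w z ▸ hw⟩

end Distance

/-- **Lemma 3.17.** Let `(E,P)` be a random locally convex module, `x ∈ E` and `G ⊆ E` a
nonempty `T_c`-closed subset with the countable concatenation property such that
`1_A{x} ∩ 1_A G = ∅` for every `A ∈ F` with `P(A) > 0`. Then `d*(x,G) > 0` a.s. on `Ω`, i.e.
`d*(x,G) ⊓ 1` (which exists in `L⁰(F,ℝ)` as the supremum over finite `Q` of the truncated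
infima `d*_Q(x,G) ⊓ 1`) belongs to `L⁰₊₊`. -/
theorem dStar_strPos_of_tcClosed_ccp {Ω : Type*} [MeasurableSpace Ω] {μ : Measure Ω}
    [IsProbabilityMeasure μ] {𝕜 : Type*} [RCLike 𝕜] {E : Type*} [AddCommGroup E]
    [Module (Ω →ₘ[μ] 𝕜) E] {ι : Type*} (ν : ι → E → Ω →ₘ[μ] ℝ) (hν : IsRLCModule 𝕜 ν)
    (x : E) (G : Set E) (hG : G.Nonempty) (hccp : HasCCP μ 𝕜 G)
    (hGclosed : @IsClosed E (tcTop ν) G)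
    (hsep : ∀ (A : Set Ω) (hA : MeasurableSet A), 0 < μ A →
      ¬ ∃ y ∈ G, L0.ind μ 𝕜 A hA • x = L0.ind μ 𝕜 A hA • y) :
    ∃ m : Ω →ₘ[μ] ℝ,
      IsLUB {c | ∃ (Q : Finset ι) (hQ : Q.Nonempty) (c' : Ω →ₘ[μ] ℝ),
        IsGLB {c'' | ∃ y ∈ G, c'' = nQ ν Q hQ (x - y)} c' ∧ c = c' ⊓ 1} m ∧
      L0.StrPos m := by
  obtain ⟨y₀, hy₀⟩ := hG
  rcases isEmpty_or_nonempty ι with hι | hι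
  · refine absurd ⟨y₀, hy₀, ?_⟩ (hsep univ .univ (by simp))
    rw [hν.separating x isEmptyElim, hν.separating y₀ isEmptyElim]
  choose d hd y hyG hdy using exists_isGLB_nQ_sub hν hccp ⟨y₀, hy₀⟩ x
  obtain ⟨m, hm⟩ := exists_isLUB_inf_one_of_forall_isGLB fun Q hQ => ⟨_, hd Q hQ⟩
  refine ⟨m, hm, ?_⟩
  set A := {ω | m ω ≤ 0}
  have hA : MeasurableSet A := measurableSet_le m.stronglyMeasurable.measurable measurable_const
  have hdA (Q : Finset ι) (hQ : Q.Nonempty) :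
      ∀ᵐ ω ∂μ, ω ∈ A → ⨅ n, nQ ν Q hQ (x - y Q hQ n) ω ≤ 0 := by
    filter_upwards [AEEqFun.coeFn_le.2 (hm.1 ⟨Q, hQ, _, hd Q hQ, rfl⟩),
      AEEqFun.coeFn_inf (d Q hQ) 1, AEEqFun.coeFn_one (β := ℝ) (μ := μ), hdy Q hQ]
      with ω hle hinf hone hdω hω
    rw [hinf, hone, Pi.one_apply, hdω] at hle
    exact (min_le_iff.1 (hle.trans hω)).resolve_right (by norm_num)
  obtain ⟨z, hzG, hz⟩ :=
    exists_mem_smul_ind_eq_of_iInf_nQ_sub_le_zero hν hccp hGclosed hy₀ x hA hyG hdA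
  have hA0 : μ A = 0 :=
    nonpos_iff_eq_zero.1 <| not_lt.1 fun hpos => hsep A hA hpos ⟨z, hzG, hz.symm⟩
  exact ae_iff.2 (by simpa [A, not_lt] using hA0)
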